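/- Let B, c₂, c₃ ∈ ℝ and define P(α,β) := 1/(4π) − (3/(8π)) sin²β cos(2α) · B + [ (3/(16π)) sin⁴β cos(4α) + c₂ sin²β cos(2α) + c₃ sin²β sin(2α) ] · B². Then, with d(α,β) = (cos α sin β, sin α sin β, cos β), the first normal stress integral satisfies ∫₀^{2π} ∫₀^{π} ( d₁(α,β)² − d₂(α,β)² ) P(α,β) sin β dβ dα = −(2/5) B + (16π/15) c₂ B². -/
import Mathlib


open MeasureTheory intervalIntegral

/-- The truncated asymptotic expansion (in the Bretherton constant `B`) of the
steady-state orientation distribution. -/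
noncomputable def Pexp (B c₂ c₃ α β : ℝ) : ℝ :=
  1 / (4 * Real.pi)
    - 3 / (8 * Real.pi) * Real.sin β ^ 2 * Real.cos (2 * α) * B
    + (3 / (16 * Real.pi) * Real.sin β ^ 4 * Real.cos (4 * α)
        + c₂ * Real.sin β ^ 2 * Real.cos (2 * α)
        + c₃ * Real.sin β ^ 2 * Real.sin (2 * α)) * B ^ 2

lemma int_sin3 : ∫ β in (0:ℝ)..Real.pi, Real.sin β ^ 3 = 4 / 3 := by
  have h : ∫ β in (0:ℝ)..Real.pi, Real.sin β ^ 3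
      = ∫ β in (0:ℝ)..Real.pi, Real.sin β ^ (2*1+1) := by norm_num
  rw [h, integral_sin_pow_odd, Finset.prod_range_succ]
  norm_num

lemma int_sin5 : ∫ β in (0:ℝ)..Real.pi, Real.sin β ^ 5 = 16 / 15 := by
  have h : ∫ β in (0:ℝ)..Real.pi, Real.sin β ^ 5
      = ∫ β in (0:ℝ)..Real.pi, Real.sin β ^ (2*2+1) := by norm_num
  rw [h, integral_sin_pow_odd, Finset.prod_range_succ, Finset.prod_range_succ]
  norm_num

lemma int_sin7 : ∫ β in (0:ℝ)..Real.pi, Real.sin β ^ 7 = 32 / 35 := by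
  have h : ∫ β in (0:ℝ)..Real.pi, Real.sin β ^ 7
      = ∫ β in (0:ℝ)..Real.pi, Real.sin β ^ (2*3+1) := by norm_num
  rw [h, integral_sin_pow_odd, Finset.prod_range_succ, Finset.prod_range_succ,
    Finset.prod_range_succ]
  norm_num

lemma int_cos_nat (n : ℕ) (hn : (n:ℝ) ≠ 0) :
    ∫ α in (0:ℝ)..(2 * Real.pi), Real.cos ((n:ℝ) * α) = 0 := by
  rw [intervalIntegral.integral_comp_mul_left _ hn, integral_cos]
  have h1 : Real.sin ((n:ℝ) * (2 * Real.pi)) = 0 := by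
    rw [show (n:ℝ) * (2 * Real.pi) = (2 * n : ℕ) * Real.pi by push_cast; ring]
    exact Real.sin_nat_mul_pi _
  simp [h1]

lemma int_sin_nat (n : ℕ) (hn : (n:ℝ) ≠ 0) :
    ∫ α in (0:ℝ)..(2 * Real.pi), Real.sin ((n:ℝ) * α) = 0 := by
  rw [intervalIntegral.integral_comp_mul_left _ hn, integral_sin]
  have h1 : Real.cos ((n:ℝ) * (2 * Real.pi)) = 1 := Real.cos_nat_mul_two_pi n
  simp [h1]

lemma int_cos2 : ∫ α in (0:ℝ)..(2*Real.pi), Real.cos (2*α) = 0 := by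
  have := int_cos_nat 2 (by norm_num)
  push_cast at this; exact this

lemma int_cos4 : ∫ α in (0:ℝ)..(2*Real.pi), Real.cos (4*α) = 0 := by
  have := int_cos_nat 4 (by norm_num)
  push_cast at this; exact this

lemma int_cos6 : ∫ α in (0:ℝ)..(2*Real.pi), Real.cos (6*α) = 0 := by
  have := int_cos_nat 6 (by norm_num)
  push_cast at this; exact this

lemma int_sin4 : ∫ α in (0:ℝ)..(2*Real.pi), Real.sin (4*α) = 0 := by
  have := int_sin_nat 4 (by norm_num)
  push_cast at this; exact this

lemma int_cos2_sq : ∫ α in (0:ℝ)..(2*Real.pi), Real.cos (2*α) ^ 2 = Real.pi := by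
  have hrw : (fun α : ℝ => Real.cos (2*α) ^ 2)
      = fun α : ℝ => 1/2 + (1/2) * Real.cos (4*α) := by
    funext α
    have h := Real.cos_sq (2*α)
    rw [show 2*(2*α) = 4*α by ring] at h
    linarith
  rw [hrw, intervalIntegral.integral_add (by apply Continuous.intervalIntegrable; fun_prop) (by apply Continuous.intervalIntegrable; fun_prop),
    intervalIntegral.integral_const_mul, int_cos4]
  simp
  ring

lemma int_cos2_cos4 : ∫ α in (0:ℝ)..(2*Real.pi), Real.cos (2*α) * Real.cos (4*α) = 0 := by
  have hrw : (fun α : ℝ => Real.cos (2*α) * Real.cos (4*α))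
      = fun α : ℝ => (1/2) * Real.cos (6*α) + (1/2) * Real.cos (2*α) := by
    funext α
    have h1 := Real.cos_add (2*α) (4*α)
    have h2 := Real.cos_sub (4*α) (2*α)
    rw [show 2*α + 4*α = 6*α by ring] at h1
    rw [show 4*α - 2*α = 2*α by ring] at h2
    linarith
  rw [hrw, intervalIntegral.integral_add (by apply Continuous.intervalIntegrable; fun_prop)
      (by apply Continuous.intervalIntegrable; fun_prop),
    intervalIntegral.integral_const_mul, intervalIntegral.integral_const_mul, int_cos6, int_cos2]
  ring

lemma int_sin2_cos2 : ∫ α in (0:ℝ)..(2*Real.pi), Real.sin (2*α) * Real.cos (2*α) = 0 := by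
  have hrw : (fun α : ℝ => Real.sin (2*α) * Real.cos (2*α))
      = fun α : ℝ => (1/2) * Real.sin (4*α) := by
    funext α
    have h := Real.sin_two_mul (2*α)
    rw [show 2*(2*α) = 4*α by ring] at h
    linarith
  rw [hrw, intervalIntegral.integral_const_mul, int_sin4]
  ring

/-- The first normal stress integral: the sphere average of
`d₁² − d₂²` against the truncated expansion `P` equals
`−(2/5)B + (16π/15) c₂ B²`. -/
theorem first_normal_stress_average (B c₂ c₃ : ℝ) :
    (∫ α in (0:ℝ)..(2 * Real.pi), ∫ β in (0:ℝ)..Real.pi,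
        ((Real.cos α * Real.sin β) ^ 2 - (Real.sin α * Real.sin β) ^ 2)
          * Pexp B c₂ c₃ α β * Real.sin β)
      = -(2 / 5) * B + 16 * Real.pi / 15 * c₂ * B ^ 2 := by
  have hπ : Real.pi ≠ 0 := Real.pi_ne_zero
  have hinner : ∀ α : ℝ, (∫ β in (0:ℝ)..Real.pi,
      ((Real.cos α * Real.sin β) ^ 2 - (Real.sin α * Real.sin β) ^ 2)
        * Pexp B c₂ c₃ α β * Real.sin β)
      = (Real.cos (2*α) * (1/(4*Real.pi))) * (4/3)
        + (Real.cos (2*α) * (-(3/(8*Real.pi)) * Real.cos (2*α) * B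
            + c₂ * Real.cos (2*α) * B^2 + c₃ * Real.sin (2*α) * B^2)) * (16/15)
        + (Real.cos (2*α) * (3/(16*Real.pi) * Real.cos (4*α) * B^2)) * (32/35) := by
    intro α
    have hrw : (fun β : ℝ => ((Real.cos α * Real.sin β) ^ 2 - (Real.sin α * Real.sin β) ^ 2)
          * Pexp B c₂ c₃ α β * Real.sin β)
        = fun β : ℝ =>
          (Real.cos (2*α) * (1/(4*Real.pi))) * Real.sin β ^ 3
          + (Real.cos (2*α) * (-(3/(8*Real.pi)) * Real.cos (2*α) * B
              + c₂ * Real.cos (2*α) * B^2 + c₃ * Real.sin (2*α) * B^2)) * Real.sin β ^ 5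
          + (Real.cos (2*α) * (3/(16*Real.pi) * Real.cos (4*α) * B^2)) * Real.sin β ^ 7 := by
      funext β
      rw [Pexp, Real.cos_two_mul' α]
      ring
    rw [hrw,
      intervalIntegral.integral_add
        (by apply Continuous.intervalIntegrable; fun_prop)
        (by apply Continuous.intervalIntegrable; fun_prop),
      intervalIntegral.integral_add
        (by apply Continuous.intervalIntegrable; fun_prop)
        (by apply Continuous.intervalIntegrable; fun_prop),
      intervalIntegral.integral_const_mul, intervalIntegral.integral_const_mul,
      intervalIntegral.integral_const_mul, int_sin3, int_sin5, int_sin7]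
  simp only [hinner]
  have hout : (fun α : ℝ =>
      (Real.cos (2*α) * (1/(4*Real.pi))) * (4/3)
        + (Real.cos (2*α) * (-(3/(8*Real.pi)) * Real.cos (2*α) * B
            + c₂ * Real.cos (2*α) * B^2 + c₃ * Real.sin (2*α) * B^2)) * (16/15)
        + (Real.cos (2*α) * (3/(16*Real.pi) * Real.cos (4*α) * B^2)) * (32/35))
      = fun α : ℝ =>
        (1/(3*Real.pi)) * Real.cos (2*α)
        + ((16/15) * (-(3/(8*Real.pi)) * B + c₂ * B^2)) * Real.cos (2*α) ^ 2
        + ((32/35) * (3/(16*Real.pi)) * B^2) * (Real.cos (2*α) * Real.cos (4*α))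
        + ((16/15) * c₃ * B^2) * (Real.sin (2*α) * Real.cos (2*α)) := by
    funext α
    field_simp
    ring
  rw [hout,
    intervalIntegral.integral_add
      (by apply Continuous.intervalIntegrable; fun_prop)
      (by apply Continuous.intervalIntegrable; fun_prop),
    intervalIntegral.integral_add
      (by apply Continuous.intervalIntegrable; fun_prop)
      (by apply Continuous.intervalIntegrable; fun_prop),
    intervalIntegral.integral_add
      (by apply Continuous.intervalIntegrable; fun_prop)
      (by apply Continuous.intervalIntegrable; fun_prop),
    intervalIntegral.integral_const_mul, intervalIntegral.integral_const_mul,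
    intervalIntegral.integral_const_mul, intervalIntegral.integral_const_mul,
    int_cos2, int_cos2_sq, int_cos2_cos4, int_sin2_cos2]
  field_simp
  ring
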